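/- arXiv:2005.04891 — 2 statements merged into one kernel-verified Lean document; each statement's English description precedes it below -/
import Mathlib

section
/- For α > 0, λ > 0, and threshold c ∈ ℝ, the CDF of the generalized Gaussian at c satisfies: ∫_{−∞}^{c} (α·λ/(2·Γ(1/α)))·exp(−λ^α·|z|^α) dz = (1/(2·Γ(1/α)))·(Γ(1/α) + sgn(c)·γ(1/α, λ^α·|c|^α)), where γ is the lower incomplete Gamma function. -/
open Real MeasureTheory Set

/-- Lower incomplete Gamma function γ(s, x) = ∫₀^x t^{s-1} e^{-t} dt. -/
noncomputable def lowerGamma (s x : ℝ) : ℝ := ∫ t in (0 : ℝ)..x, t ^ (s - 1) * Real.exp (-t)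

section aux

variable {α lam : ℝ}

private lemma ggn_mono (hα : 0 < α) (hlam : 0 < lam) :
    StrictMonoOn (fun z : ℝ => lam ^ α * z ^ α) (Ioi 0) := by
  intro a ha b _ hab
  exact mul_lt_mul_of_pos_left (Real.rpow_lt_rpow (le_of_lt ha) hab hα)
    (Real.rpow_pos_of_pos hlam α)

private lemma ggn_deriv (hα : 0 < α) {S : Set ℝ} (hS : S ⊆ Ioi 0) :
    ∀ z ∈ S, HasDerivWithinAt (fun z : ℝ => lam ^ α * z ^ α)
      (lam ^ α * (α * z ^ (α - 1))) S z := fun z hz =>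
  ((Real.hasDerivAt_rpow_const (p := α) (Or.inl (ne_of_gt (hS hz)))).const_mul
    (lam ^ α)).hasDerivWithinAt

private lemma ggn_image_Ioi (hα : 0 < α) (hlam : 0 < lam) :
    (fun z : ℝ => lam ^ α * z ^ α) '' Ioi 0 = Ioi 0 := by
  have hb : (0 : ℝ) < lam ^ α := Real.rpow_pos_of_pos hlam α
  ext y
  constructor
  · rintro ⟨z, hz, rfl⟩
    exact mul_pos hb (Real.rpow_pos_of_pos hz α)
  · intro hy
    refine ⟨(y / lam ^ α) ^ (1 / α), Real.rpow_pos_of_pos (div_pos hy hb) _, ?_⟩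
    have h1 : ((y / lam ^ α) ^ (1 / α)) ^ α = y / lam ^ α := by
      rw [← Real.rpow_mul (div_pos hy hb).le, one_div_mul_cancel hα.ne', Real.rpow_one]
    simp only [h1]
    rw [mul_comm, div_mul_cancel₀ _ hb.ne']

private lemma ggn_image_Ioc (hα : 0 < α) (hlam : 0 < lam) {x : ℝ} (hx : 0 < x) :
    (fun z : ℝ => lam ^ α * z ^ α) '' Ioc 0 x = Ioc 0 (lam ^ α * x ^ α) := by
  have hb : (0 : ℝ) < lam ^ α := Real.rpow_pos_of_pos hlam α
  ext y
  constructor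
  · rintro ⟨z, hz, rfl⟩
    exact ⟨mul_pos hb (Real.rpow_pos_of_pos hz.1 α),
      mul_le_mul_of_nonneg_left (Real.rpow_le_rpow hz.1.le hz.2 hα.le) hb.le⟩
  · rintro ⟨hy1, hy2⟩
    have hdiv : 0 < y / lam ^ α := div_pos hy1 hb
    refine ⟨(y / lam ^ α) ^ (1 / α), ⟨Real.rpow_pos_of_pos hdiv _, ?_⟩, ?_⟩
    · have hle : y / lam ^ α ≤ x ^ α := (div_le_iff₀' hb).mpr hy2
      calc (y / lam ^ α) ^ (1 / α) ≤ (x ^ α) ^ (1 / α) :=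
            Real.rpow_le_rpow hdiv.le hle (by positivity)
        _ = x := by
            rw [← Real.rpow_mul hx.le, mul_one_div_cancel hα.ne', Real.rpow_one]
    · have h1 : ((y / lam ^ α) ^ (1 / α)) ^ α = y / lam ^ α := by
        rw [← Real.rpow_mul hdiv.le, one_div_mul_cancel hα.ne', Real.rpow_one]
      simp only [h1]
      rw [mul_comm, div_mul_cancel₀ _ hb.ne']

private lemma ggn_pointwise (hα : 0 < α) (hlam : 0 < lam) {z : ℝ} (hz : 0 < z) :
    |lam ^ α * (α * z ^ (α - 1))| *
      ((lam ^ α * z ^ α) ^ (1 / α - 1) * Real.exp (-(lam ^ α * z ^ α)))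
      = α * lam * Real.exp (-(lam ^ α * z ^ α)) := by
  have hb : (0 : ℝ) < lam ^ α := Real.rpow_pos_of_pos hlam α
  have h1 : lam ^ α * z ^ α = (lam * z) ^ α := (Real.mul_rpow hlam.le hz.le).symm
  have h2 : (lam ^ α * z ^ α) ^ (1 / α - 1) = lam ^ (1 - α) * z ^ (1 - α) := by
    rw [h1, ← Real.rpow_mul (by positivity), mul_sub, mul_one,
      mul_one_div_cancel hα.ne', Real.mul_rpow hlam.le hz.le]
  rw [h2, abs_of_nonneg (by positivity)]
  have h3 : lam ^ α * (α * z ^ (α - 1)) * (lam ^ (1 - α) * z ^ (1 - α) *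
      Real.exp (-(lam ^ α * z ^ α)))
      = α * (lam ^ α * lam ^ (1 - α)) * (z ^ (α - 1) * z ^ (1 - α)) *
        Real.exp (-(lam ^ α * z ^ α)) := by ring
  rw [h3, ← Real.rpow_add hlam, ← Real.rpow_add hz,
    show α + (1 - α) = 1 by ring, show α - 1 + (1 - α) = 0 by ring,
    Real.rpow_one, Real.rpow_zero, mul_one]

private lemma ggn_gamma_integrand_integrable (hα : 0 < α) :
    IntegrableOn (fun t : ℝ => t ^ (1 / α - 1) * Real.exp (-t)) (Ioi 0) := by
  have := Real.GammaIntegral_convergent (s := 1 / α) (by positivity)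
  exact this.congr_fun (fun t _ => mul_comm _ _) measurableSet_Ioi

private lemma ggn_integrableOn_Ioi (hα : 0 < α) (hlam : 0 < lam) :
    IntegrableOn (fun z : ℝ => α * lam * Real.exp (-(lam ^ α * z ^ α))) (Ioi 0) := by
  have h := (integrableOn_image_iff_integrableOn_abs_deriv_smul measurableSet_Ioi
    (ggn_deriv hα (le_refl _)) ((ggn_mono hα hlam).injOn)
    (fun t : ℝ => t ^ (1 / α - 1) * Real.exp (-t))).mp
    (by rw [ggn_image_Ioi hα hlam]; exact ggn_gamma_integrand_integrable hα)
  refine h.congr_fun (fun z hz => ?_) measurableSet_Ioi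
  simpa [smul_eq_mul, mul_assoc] using ggn_pointwise hα hlam hz

private lemma ggn_integral_Ioi (hα : 0 < α) (hlam : 0 < lam) :
    ∫ z in Ioi (0 : ℝ), α * lam * Real.exp (-(lam ^ α * z ^ α)) = Real.Gamma (1 / α) := by
  have h := integral_image_eq_integral_abs_deriv_smul measurableSet_Ioi
    (ggn_deriv hα (le_refl _)) ((ggn_mono hα hlam).injOn)
    (fun t : ℝ => t ^ (1 / α - 1) * Real.exp (-t))
  rw [ggn_image_Ioi hα hlam] at h
  have h' : ∫ z in Ioi (0:ℝ),
      |lam ^ α * (α * z ^ (α - 1))| • ((lam ^ α * z ^ α) ^ (1 / α - 1)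
        * Real.exp (-(lam ^ α * z ^ α)))
      = ∫ z in Ioi (0:ℝ), α * lam * Real.exp (-(lam ^ α * z ^ α)) :=
    setIntegral_congr_fun measurableSet_Ioi
      (fun z hz => by rw [smul_eq_mul]; exact ggn_pointwise hα hlam hz)
  rw [h'] at h
  rw [← h, Real.Gamma_eq_integral (by positivity : (0:ℝ) < 1 / α)]
  exact setIntegral_congr_fun measurableSet_Ioi (fun t _ => mul_comm _ _)

private lemma ggn_interval (hα : 0 < α) (hlam : 0 < lam) {x : ℝ} (hx : 0 ≤ x) :
    ∫ z in (0:ℝ)..x, α * lam * Real.exp (-(lam ^ α * z ^ α))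
      = lowerGamma (1 / α) (lam ^ α * x ^ α) := by
  rcases eq_or_lt_of_le hx with rfl | hx
  · simp [lowerGamma, Real.zero_rpow hα.ne']
  have hy : (0:ℝ) ≤ lam ^ α * x ^ α := by positivity
  rw [intervalIntegral.integral_of_le hx.le, lowerGamma, intervalIntegral.integral_of_le hy]
  have h := integral_image_eq_integral_abs_deriv_smul measurableSet_Ioc
    (ggn_deriv hα (Ioc_subset_Ioi_self : Ioc (0:ℝ) x ⊆ Ioi 0))
    (((ggn_mono hα hlam).injOn).mono Ioc_subset_Ioi_self)
    (fun t : ℝ => t ^ (1 / α - 1) * Real.exp (-t))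
  rw [ggn_image_Ioc hα hlam hx] at h
  rw [h]
  exact (setIntegral_congr_fun measurableSet_Ioc
    (fun z hz => by rw [smul_eq_mul]; exact ggn_pointwise hα hlam hz.1)).symm

private noncomputable def ggnF (α lam : ℝ) : ℝ → ℝ :=
  fun z => α * lam * Real.exp (-(lam ^ α * |z| ^ α))

private lemma ggnF_neg (z : ℝ) : ggnF α lam (-z) = ggnF α lam z := by
  simp [ggnF]

private lemma ggnF_integrableOn_Ioi (hα : 0 < α) (hlam : 0 < lam) :
    IntegrableOn (ggnF α lam) (Ioi 0) :=
  (ggn_integrableOn_Ioi hα hlam).congr_fun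
    (fun z hz => by simp [ggnF, abs_of_pos (mem_Ioi.mp hz)]) measurableSet_Ioi

private lemma ggnF_integrable (hα : 0 < α) (hlam : 0 < lam) :
    Integrable (ggnF α lam) := by
  rw [← integrableOn_univ, ← Iic_union_Ioi (a := (0:ℝ)), integrableOn_union]
  refine ⟨?_, ggnF_integrableOn_Ioi hα hlam⟩
  rw [← (Measure.measurePreserving_neg (volume : Measure ℝ)).integrableOn_comp_preimage
      (Homeomorph.neg ℝ).measurableEmbedding]
  simp only [Function.comp_def, neg_preimage, neg_Iic, neg_zero, ggnF_neg]
  rw [integrableOn_Ici_iff_integrableOn_Ioi]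
  exact ggnF_integrableOn_Ioi hα hlam

private lemma ggnF_integral_Iic_zero (hα : 0 < α) (hlam : 0 < lam) :
    ∫ z in Iic (0:ℝ), ggnF α lam z = Real.Gamma (1 / α) := by
  have h1 : ∫ z in Iic (0:ℝ), ggnF α lam z = ∫ z in Iic (0:ℝ), ggnF α lam (-z) :=
    setIntegral_congr_fun measurableSet_Iic (fun z _ => (ggnF_neg z).symm)
  rw [h1, _root_.integral_comp_neg_Iic, neg_zero, ← ggn_integral_Ioi hα hlam]
  exact setIntegral_congr_fun measurableSet_Ioi
    (fun z hz => by simp [ggnF, abs_of_pos (mem_Ioi.mp hz)])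

private lemma ggnF_interval (hα : 0 < α) (hlam : 0 < lam) {x : ℝ} (hx : 0 ≤ x) :
    ∫ z in (0:ℝ)..x, ggnF α lam z = lowerGamma (1 / α) (lam ^ α * x ^ α) := by
  rw [← ggn_interval hα hlam hx]
  refine intervalIntegral.integral_congr (fun z hz => ?_)
  rw [uIcc_of_le hx] at hz
  simp [ggnF, abs_of_nonneg hz.1]

private lemma ggnF_interval' (hα : 0 < α) (hlam : 0 < lam) (c : ℝ) :
    ∫ z in (0:ℝ)..c, ggnF α lam z
      = Real.sign c * lowerGamma (1 / α) (lam ^ α * |c| ^ α) := by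
  rcases lt_trichotomy c 0 with hc | rfl | hc
  · rw [Real.sign_of_neg hc, abs_of_neg hc, neg_one_mul,
      ← ggnF_interval hα hlam (neg_nonneg.mpr hc.le)]
    have h1 : ∫ z in (-c:ℝ)..0, ggnF α lam z = ∫ z in (0:ℝ)..c, ggnF α lam z := by
      rw [show (0:ℝ) = -(-0) by ring, show c = -(-c) by ring,
        ← intervalIntegral.integral_comp_neg (fun z => ggnF α lam z)]
      simp only [neg_neg, ggnF_neg, neg_zero]
    rw [← h1, ← intervalIntegral.integral_symm]
  · simp [Real.sign_zero]
  · rw [Real.sign_of_pos hc, abs_of_pos hc, one_mul]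
    exact ggnF_interval hα hlam hc.le

end aux

theorem ggn_cdf (α lam c : ℝ) (hα : 0 < α) (hlam : 0 < lam) :
    ∫ z in Set.Iic c, (α * lam / (2 * Real.Gamma (1 / α))) * Real.exp (-(lam ^ α * |z| ^ α))
      = (1 / (2 * Real.Gamma (1 / α)))
        * (Real.Gamma (1 / α) + Real.sign c * lowerGamma (1 / α) (lam ^ α * |c| ^ α)) := by
  have hInt := ggnF_integrable hα hlam
  have hdec := intervalIntegral.integral_Iic_sub_Iic (μ := volume) (f := ggnF α lam) (a := 0) (b := c)
    hInt.integrableOn hInt.integrableOn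
  have h0 := ggnF_integral_Iic_zero hα hlam
  have h1 := ggnF_interval' hα hlam c
  have key : ∫ z in Iic c, ggnF α lam z
      = Real.Gamma (1 / α) + Real.sign c * lowerGamma (1 / α) (lam ^ α * |c| ^ α) := by
    rw [← h0, ← h1]; linarith
  calc ∫ z in Set.Iic c,
        (α * lam / (2 * Real.Gamma (1 / α))) * Real.exp (-(lam ^ α * |z| ^ α))
      = ∫ z in Set.Iic c, (1 / (2 * Real.Gamma (1 / α))) * ggnF α lam z := by
        refine setIntegral_congr_fun measurableSet_Iic (fun z _ => ?_)
        simp only [ggnF]; ring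
    _ = (1 / (2 * Real.Gamma (1 / α))) * ∫ z in Set.Iic c, ggnF α lam z :=
        integral_const_mul _ _
    _ = _ := by rw [key]
end

section
/- Integration by parts for the T₂ integral: for a > 0, s > 0, β > 0, α > 0, ∫₀^∞ ω·exp(−aω²/2)·γ(1/α, β^α·ω^α) dω = (α·β/a)·∫₀^∞ exp(−β^α·ω^α)·exp(−a·ω²/2) dω. -/
/-! Integrate by parts against `v(ω) = -e^{-aω²/2}/a`, whose derivative is `ω e^{-aω²/2}`. By the
fundamental theorem of calculus and the chain rule, `ω ↦ γ(1/α, β^α ω^α)` has derivative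
`α β e^{-(βω)^α}`. The boundary terms vanish because `0 ≤ γ(s, x) ≤ min (Γ(s), x^s / s)`. -/

open Real MeasureTheory Set

open Filter Topology

section LowerGamma

variable {s x : ℝ}

lemma intervalIntegrable_rpow_sub_one_mul_exp_neg (hs : 0 < s) (x : ℝ) :
    IntervalIntegrable (fun t => t ^ (s - 1) * exp (-t)) volume 0 x :=
  (intervalIntegral.intervalIntegrable_rpow' (by linarith)).mul_continuousOn
    (continuous_exp.comp continuous_neg).continuousOn

lemma lowerGamma_nonneg (hx : 0 ≤ x) : 0 ≤ lowerGamma s x :=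
  intervalIntegral.integral_nonneg hx fun t ht => by have := ht.1; positivity

lemma lowerGamma_le_Gamma (hs : 0 < s) (hx : 0 ≤ x) : lowerGamma s x ≤ Gamma s := by
  rw [lowerGamma, intervalIntegral.integral_of_le hx, Gamma_eq_integral hs]
  simp_rw [mul_comm (exp _)]
  refine setIntegral_mono_set
    ((GammaIntegral_convergent hs).congr_fun (fun t _ => mul_comm _ _) measurableSet_Ioi) ?_
    Ioc_subset_Ioi_self.eventuallyLE
  filter_upwards [ae_restrict_mem measurableSet_Ioi] with t ht
  have : 0 < t := ht
  positivity

lemma lowerGamma_le_rpow_div (hs : 0 < s) (hx : 0 ≤ x) : lowerGamma s x ≤ x ^ s / s := by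
  calc lowerGamma s x ≤ ∫ t in (0 : ℝ)..x, t ^ (s - 1) := by
        refine intervalIntegral.integral_mono_on hx
          (intervalIntegrable_rpow_sub_one_mul_exp_neg hs x)
          (intervalIntegral.intervalIntegrable_rpow' (by linarith)) fun t ht => ?_
        exact mul_le_of_le_one_right (rpow_nonneg ht.1 _)
          (exp_le_one_iff.mpr (by linarith [ht.1]))
    _ = x ^ s / s := by
        rw [integral_rpow (Or.inl (by linarith)), sub_add_cancel, zero_rpow hs.ne', sub_zero]

lemma tendsto_lowerGamma_nhdsGE_zero (hs : 0 < s) :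
    Tendsto (lowerGamma s) (𝓝[≥] 0) (𝓝 0) := by
  have hbound : Tendsto (fun x : ℝ => x ^ s / s) (𝓝 0) (𝓝 0) := by
    simpa [zero_rpow hs.ne'] using
      ((continuousAt_rpow_const 0 s (Or.inr hs.le)).div_const s).tendsto
  refine tendsto_of_tendsto_of_tendsto_of_le_of_le' tendsto_const_nhds
    (hbound.mono_left nhdsWithin_le_nhds) ?_ ?_
  · filter_upwards [self_mem_nhdsWithin] with x hx using lowerGamma_nonneg hx
  · filter_upwards [self_mem_nhdsWithin] with x hx using lowerGamma_le_rpow_div hs hx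

lemma hasDerivAt_lowerGamma (hs : 0 < s) (hx : 0 < x) :
    HasDerivAt (lowerGamma s) (x ^ (s - 1) * exp (-x)) x := by
  have hcont : ∀ t ∈ Ioi (0 : ℝ), ContinuousAt (fun t => t ^ (s - 1) * exp (-t)) t := fun t ht =>
    (continuousAt_rpow_const t _ (Or.inl (ne_of_gt ht))).mul
      (continuous_exp.comp continuous_neg).continuousAt
  exact intervalIntegral.integral_hasDerivAt_right
    (intervalIntegrable_rpow_sub_one_mul_exp_neg hs x)
    (ContinuousAt.stronglyMeasurableAtFilter isOpen_Ioi hcont x hx) (hcont x hx)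

lemma tendsto_lowerGamma_mul_rpow_nhdsGT_zero {c α : ℝ} (hs : 0 < s) (hc : 0 ≤ c) (hα : 0 < α) :
    Tendsto (fun ω => lowerGamma s (c * ω ^ α)) (𝓝[>] 0) (𝓝 0) := by
  have hcont : Tendsto (fun ω : ℝ => c * ω ^ α) (𝓝 0) (𝓝 0) := by
    simpa [zero_rpow hα.ne'] using
      ((continuousAt_rpow_const 0 α (Or.inr hα.le)).const_mul c).tendsto
  refine (tendsto_lowerGamma_nhdsGE_zero hs).comp (tendsto_nhdsWithin_iff.mpr
    ⟨hcont.mono_left nhdsWithin_le_nhds, ?_⟩)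
  filter_upwards [self_mem_nhdsWithin] with ω hω
  exact mul_nonneg hc (rpow_nonneg (le_of_lt hω) α)

end LowerGamma

lemma hasDerivAt_lowerGamma_one_div_mul_rpow {α β ω : ℝ} (hα : 0 < α) (hβ : 0 < β)
    (hω : 0 < ω) :
    HasDerivAt (fun ω => lowerGamma (1 / α) (β ^ α * ω ^ α))
      (α * β * exp (-(β ^ α * ω ^ α))) ω := by
  have hinner : HasDerivAt (fun ω : ℝ => β ^ α * ω ^ α) (β ^ α * (α * ω ^ (α - 1))) ω :=
    (hasDerivAt_rpow_const (Or.inl hω.ne')).const_mul _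
  have hpos : 0 < β ^ α * ω ^ α := by positivity
  refine ((hasDerivAt_lowerGamma (one_div_pos.mpr hα) hpos).comp ω hinner).congr_deriv ?_
  -- with `x = βω`, the chain-rule factor is `(x^α)^(1/α - 1) · x^α · α / ω = α x / ω = α β`
  have hβω : (β * ω) ^ α = β ^ α * ω ^ α := mul_rpow hβ.le hω.le
  rw [rpow_sub_one hω.ne', rpow_sub_one hpos.ne', ← hβω, one_div,
    rpow_rpow_inv (by positivity) hα.ne']
  field_simp
  exact hβω.symm

section GaussianIntegrationByParts

variable {a : ℝ}

lemma hasDerivAt_neg_exp_neg_mul_sq_div_two_div (ha : 0 < a) (ω : ℝ) :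
    HasDerivAt (fun ω => -(exp (-(a * ω ^ 2 / 2)) / a)) (ω * exp (-(a * ω ^ 2 / 2))) ω := by
  have hexp : HasDerivAt (fun ω : ℝ => -(a * ω ^ 2 / 2)) (-(a * ω)) ω := by
    refine (((hasDerivAt_pow 2 ω).const_mul a).div_const 2).fun_neg.congr_deriv ?_
    push_cast
    ring
  refine (hexp.exp.div_const a).neg.congr_deriv ?_
  field_simp

lemma integrable_exp_neg_mul_sq_div_two (ha : 0 < a) :
    Integrable (fun ω : ℝ => exp (-(a * ω ^ 2 / 2))) := by
  simpa [neg_div, mul_div_right_comm] using integrable_exp_neg_mul_sq (half_pos ha)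

lemma integrable_mul_exp_neg_mul_sq_div_two (ha : 0 < a) :
    Integrable (fun ω : ℝ => ω * exp (-(a * ω ^ 2 / 2))) := by
  simpa [neg_div, mul_div_right_comm] using integrable_mul_exp_neg_mul_sq (half_pos ha)

theorem integral_Ioi_mul_exp_neg_mul_sq_div_two_mul {u u' : ℝ → ℝ} {C : ℝ} (ha : 0 < a)
    (hu : ∀ ω ∈ Ioi (0 : ℝ), HasDerivAt u (u' ω) ω)
    (hu_zero : Tendsto u (𝓝[>] 0) (𝓝 0))
    (hu_bdd : ∀ ω ∈ Ioi (0 : ℝ), ‖u ω‖ ≤ C)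
    (hu'_int : IntegrableOn (fun ω => u' ω * exp (-(a * ω ^ 2 / 2))) (Ioi 0)) :
    ∫ ω in Ioi (0 : ℝ), ω * exp (-(a * ω ^ 2 / 2)) * u ω
      = 1 / a * ∫ ω in Ioi (0 : ℝ), u' ω * exp (-(a * ω ^ 2 / 2)) := by
  set v : ℝ → ℝ := fun ω => -(exp (-(a * ω ^ 2 / 2)) / a)
  have hv_cont : Continuous v := by fun_prop
  have hu_cont : ContinuousOn u (Ioi 0) := fun ω hω => (hu ω hω).continuousAt.continuousWithinAt
  have huv' : IntegrableOn (u * fun ω => ω * exp (-(a * ω ^ 2 / 2))) (Ioi 0) :=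
    (integrable_mul_exp_neg_mul_sq_div_two ha).integrableOn.bdd_mul
      (hu_cont.aestronglyMeasurable measurableSet_Ioi)
      (ae_restrict_of_forall_mem measurableSet_Ioi hu_bdd)
  have huv_eq : ∀ ω, u' ω * -(exp (-(a * ω ^ 2 / 2)) / a)
      = -(1 / a * (u' ω * exp (-(a * ω ^ 2 / 2)))) := fun ω => by ring
  have hu'v : IntegrableOn (u' * v) (Ioi 0) := by
    rw [show u' * v = _ from funext huv_eq]
    exact (hu'_int.const_mul (1 / a)).neg
  have h_zero : Tendsto (u * v) (𝓝[>] 0) (𝓝 0) := by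
    have := hu_zero.mul ((hv_cont.tendsto 0).mono_left nhdsWithin_le_nhds)
    rwa [zero_mul] at this
  have h_infty : Tendsto (u * v) atTop (𝓝 0) := by
    have hgauss : Tendsto (fun ω : ℝ => exp (-(a * ω ^ 2 / 2))) atTop (𝓝 0) :=
      tendsto_exp_atBot.comp (tendsto_neg_atTop_atBot.comp
        (((tendsto_pow_atTop two_ne_zero).const_mul_atTop ha).atTop_div_const two_pos))
    refine squeeze_zero_norm' ?_ (by simpa using (hgauss.div_const a).const_mul C)
    filter_upwards [eventually_gt_atTop 0] with ω hω
    rw [Pi.mul_apply, norm_mul, norm_neg, norm_div, norm_of_nonneg (exp_pos _).le,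
      norm_of_nonneg ha.le]
    exact mul_le_mul_of_nonneg_right (hu_bdd ω hω) (by positivity)
  rw [funext fun ω => mul_comm (ω * exp (-(a * ω ^ 2 / 2))) (u ω),
    integral_Ioi_mul_deriv_eq_deriv_mul hu
      (fun ω _ => hasDerivAt_neg_exp_neg_mul_sq_div_two_div ha ω) huv' hu'v h_zero h_infty]
  simp only [huv_eq, integral_neg, integral_const_mul]
  ring

end GaussianIntegrationByParts

theorem t2_integration_by_parts (a β α : ℝ) (ha : 0 < a) (hβ : 0 < β) (hα : 0 < α) :
    ∫ ω in Set.Ioi (0 : ℝ), ω * Real.exp (-(a * ω ^ 2 / 2)) * lowerGamma (1 / α) (β ^ α * ω ^ α)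
      = (α * β / a) * ∫ ω in Set.Ioi (0 : ℝ), Real.exp (-(β ^ α * ω ^ α)) * Real.exp (-(a * ω ^ 2 / 2)) := by
  have hs : 0 < 1 / α := one_div_pos.mpr hα
  have hbdd : ∀ ω ∈ Ioi (0 : ℝ), ‖lowerGamma (1 / α) (β ^ α * ω ^ α)‖ ≤ Gamma (1 / α) := by
    intro ω hω
    have hx : 0 ≤ β ^ α * ω ^ α := by have : 0 < ω := hω; positivity
    rw [norm_of_nonneg (lowerGamma_nonneg hx)]
    exact lowerGamma_le_Gamma hs hx
  have hint : IntegrableOn (fun ω => α * β * exp (-(β ^ α * ω ^ α)) * exp (-(a * ω ^ 2 / 2)))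
      (Ioi 0) := by
    refine (integrable_exp_neg_mul_sq_div_two ha).integrableOn.bdd_mul (c := α * β) (by fun_prop)
      (ae_restrict_of_forall_mem measurableSet_Ioi fun ω hω => ?_)
    have hx : 0 ≤ β ^ α * ω ^ α := by have : 0 < ω := hω; positivity
    rw [norm_of_nonneg (by positivity)]
    exact mul_le_of_le_one_right (by positivity) (exp_le_one_iff.mpr (neg_nonpos.mpr hx))
  rw [integral_Ioi_mul_exp_neg_mul_sq_div_two_mul ha
    (fun ω hω => hasDerivAt_lowerGamma_one_div_mul_rpow hα hβ hω)
    (tendsto_lowerGamma_mul_rpow_nhdsGT_zero hs (by positivity) hα) hbdd hint]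
  simp_rw [mul_assoc (α * β), integral_const_mul]
  ring
end
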